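/- arXiv:2508.04644 — 2 statements merged into one kernel-verified Lean document; each statement's English description precedes it below -/
import Mathlib

section
/- An (n,n)-function F is APN (differential uniformity 2) if and only if Σ_{b≠0} α(F_b) = 2^{n+1} − 2, where F_b(x) = b·F(x) and α(g) = 2^{-3n} Σ_u χ̂_g(u)^4. -/
open Finset

/-- The vector space `F_2^n`. -/
abbrev V (n : ℕ) : Type := Fin n → ZMod 2

/-- The standard dot product on `F_2^n`. -/
def dotP {n : ℕ} (a x : V n) : ZMod 2 := ∑ i, a i * x i

/-- The Walsh transform of a Boolean function `f` on `F_2^n`. -/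
def walsh {n : ℕ} (f : V n → ZMod 2) (a : V n) : ℤ :=
  ∑ x : V n, (-1 : ℤ) ^ ((f x + dotP a x).val)

/-- The normalized fourth power moment of the Walsh transform. -/
noncomputable def alphaQ {n : ℕ} (f : V n → ZMod 2) : ℚ :=
  ((∑ u : V n, (walsh f u) ^ 4 : ℤ) : ℚ) / 2 ^ (3 * n)

/-- The differential uniformity of a function between finite abelian groups of exponent 2. -/
def diffUnif {G H : Type*} [AddCommGroup G] [Fintype G] [DecidableEq G]
    [AddCommGroup H] [Fintype H] [DecidableEq H] (F : G → H) : ℕ :=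
  Finset.sup (Finset.univ.filter fun p : G × H => p.1 ≠ 0)
    (fun p => (Finset.univ.filter fun x => F (x + p.1) + F x = p.2).card)

/-! ### Auxiliary material -/

noncomputable def e (s : ZMod 2) : ℤ := (-1) ^ s.val

lemma e_add (s t : ZMod 2) : e (s + t) = e s * e t := by revert s t; decide

lemma e_zero : e 0 = 1 := by decide

lemma card_V (n : ℕ) : Fintype.card (V n) = 2 ^ n := by
  simp [Fintype.card_fun]

lemma dotP_add_left {n : ℕ} (a b y : V n) :
    dotP (a + b) y = dotP a y + dotP b y := by
  simp [dotP, add_mul, Finset.sum_add_distrib]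

lemma dotP_add_right {n : ℕ} (a x y : V n) :
    dotP a (x + y) = dotP a x + dotP a y := by
  simp [dotP, mul_add, Finset.sum_add_distrib]

lemma dotP_zero_left {n : ℕ} (y : V n) : dotP 0 y = 0 := by simp [dotP]

lemma dotP_single {n : ℕ} (i : Fin n) (y : V n) :
    dotP (Pi.single i 1) y = y i := by
  simp [dotP, Pi.single_apply, Finset.sum_ite_eq]

lemma char2V {n : ℕ} (v : V n) : v + v = 0 := by
  funext i; simp only [Pi.add_apply, Pi.zero_apply]
  generalize v i = z; revert z; decide

lemma negV {n : ℕ} (x : V n) : -x = x := neg_eq_of_add_eq_zero_left (char2V x)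

lemma add_eq_zero_iff_V {n : ℕ} (x y : V n) : x + y = 0 ↔ y = x := by
  constructor
  · intro h; rw [eq_neg_of_add_eq_zero_right h, negV]
  · rintro rfl; exact char2V _

lemma sum_e_dotP_left {n : ℕ} (y : V n) :
    ∑ b : V n, e (dotP b y) = if y = 0 then (2 ^ n : ℤ) else 0 := by
  split_ifs with h
  · subst h
    simp only [dotP, mul_zero, Pi.zero_apply, Finset.sum_const_zero]
    simp [e_zero, card_V]
  · obtain ⟨i, hi⟩ : ∃ i, y i ≠ 0 := by
      by_contra hc; push_neg at hc; exact h (funext hc)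
    have hy1 : y i = 1 := by
      revert hi; generalize y i = z; revert z; decide
    set b0 : V n := Pi.single i 1 with hb0
    have hdb0 : dotP b0 y = 1 := by rw [hb0, dotP_single, hy1]
    have key : ∑ b : V n, e (dotP b y) = ∑ b : V n, e (dotP (b0 + b) y) :=
      (Fintype.sum_equiv (Equiv.addLeft b0) _ _ (fun b => rfl)).symm
    have neg : ∑ b : V n, e (dotP (b0 + b) y) = - ∑ b : V n, e (dotP b y) := by
      rw [eq_neg_iff_add_eq_zero, ← Finset.sum_add_distrib]
      refine Finset.sum_eq_zero fun b _ => ?_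
      rw [dotP_add_left, e_add, hdb0]
      have : e 1 = -1 := by decide
      rw [this]; ring
    have := key.trans neg
    linarith

lemma sum_pow_four {α : Type*} [Fintype α] (g : α → ℤ) :
    (∑ x, g x) ^ 4 = ∑ x1 : α, ∑ x2 : α, ∑ x3 : α, ∑ x4 : α,
      g x1 * g x2 * g x3 * g x4 := by
  have : (∑ x, g x) ^ 4 = (∑ x, g x) * ((∑ x, g x) * ((∑ x, g x) * (∑ x, g x))) := by ring
  rw [this]
  simp only [Finset.mul_sum, Finset.sum_mul]
  refine sum_congr rfl fun x1 _ => sum_congr rfl fun x2 _ =>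
    sum_congr rfl fun x3 _ => sum_congr rfl fun x4 _ => by ring

lemma walsh_eq {n : ℕ} (F : V n → V n) (b u : V n) :
    walsh (fun x => dotP b (F x)) u = ∑ x : V n, e (dotP b (F x)) * e (dotP u x) := by
  unfold walsh
  exact sum_congr rfl fun x _ => (e_add _ _)

lemma walsh4_sum {n : ℕ} (F : V n → V n) (b : V n) :
    ∑ u : V n, (walsh (fun x => dotP b (F x)) u) ^ 4
      = 2 ^ n * ∑ x1 : V n, ∑ x2 : V n, ∑ x3 : V n,
          e (dotP b (F x1 + F x2 + F x3 + F (x1 + x2 + x3))) := by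
  set A : V n → ℤ := fun x => e (dotP b (F x)) with hA
  have expand : ∀ u : V n, (walsh (fun x => dotP b (F x)) u) ^ 4
      = ∑ x1 : V n, ∑ x2 : V n, ∑ x3 : V n, ∑ x4 : V n,
          (A x1 * A x2 * A x3 * A x4) * e (dotP u (x1 + x2 + x3 + x4)) := by
    intro u
    rw [walsh_eq, sum_pow_four]
    refine sum_congr rfl fun x1 _ => sum_congr rfl fun x2 _ =>
      sum_congr rfl fun x3 _ => sum_congr rfl fun x4 _ => ?_
    simp only [dotP_add_right, e_add, hA]
    ring
  calc ∑ u : V n, (walsh (fun x => dotP b (F x)) u) ^ 4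
      = ∑ u : V n, ∑ x1 : V n, ∑ x2 : V n, ∑ x3 : V n, ∑ x4 : V n,
          (A x1 * A x2 * A x3 * A x4) * e (dotP u (x1 + x2 + x3 + x4)) :=
        sum_congr rfl fun u _ => expand u
    _ = ∑ x1 : V n, ∑ x2 : V n, ∑ x3 : V n, ∑ x4 : V n,
          (A x1 * A x2 * A x3 * A x4) * (if x1 + x2 + x3 + x4 = 0 then (2 ^ n : ℤ) else 0) := by
        rw [Finset.sum_comm]
        refine sum_congr rfl fun x1 _ => ?_
        rw [Finset.sum_comm]
        refine sum_congr rfl fun x2 _ => ?_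
        rw [Finset.sum_comm]
        refine sum_congr rfl fun x3 _ => ?_
        rw [Finset.sum_comm]
        refine sum_congr rfl fun x4 _ => ?_
        rw [← Finset.mul_sum, sum_e_dotP_left]
    _ = ∑ x1 : V n, ∑ x2 : V n, ∑ x3 : V n,
          (A x1 * A x2 * A x3 * A (x1 + x2 + x3)) * 2 ^ n := by
        refine sum_congr rfl fun x1 _ => sum_congr rfl fun x2 _ =>
          sum_congr rfl fun x3 _ => ?_
        simp only [add_eq_zero_iff_V, mul_ite, mul_zero, Finset.sum_ite_eq',
          mem_univ, if_true]
    _ = 2 ^ n * ∑ x1 : V n, ∑ x2 : V n, ∑ x3 : V n,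
          e (dotP b (F x1 + F x2 + F x3 + F (x1 + x2 + x3))) := by
        rw [Finset.mul_sum]
        refine sum_congr rfl fun x1 _ => ?_
        rw [Finset.mul_sum]
        refine sum_congr rfl fun x2 _ => ?_
        rw [Finset.mul_sum]
        refine sum_congr rfl fun x3 _ => ?_
        simp only [dotP_add_right, e_add, hA]
        ring

/-- number of solutions of `F (x+a) + F x = v` -/
def dcnt {n : ℕ} (F : V n → V n) (a v : V n) : ℕ :=
  (univ.filter fun x => F (x + a) + F x = v).card

def Nint {n : ℕ} (F : V n → V n) : ℤ :=
  ∑ x1 : V n, ∑ x2 : V n, ∑ x3 : V n,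
    if F x1 + F x2 + F x3 + F (x1 + x2 + x3) = 0 then (1 : ℤ) else 0

lemma total_sum {n : ℕ} (F : V n → V n) :
    ∑ b : V n, ∑ u : V n, (walsh (fun x => dotP b (F x)) u) ^ 4
      = 2 ^ (2 * n) * Nint F := by
  simp only [walsh4_sum]
  rw [← Finset.mul_sum]
  have swap : ∑ b : V n, ∑ x1 : V n, ∑ x2 : V n, ∑ x3 : V n,
      e (dotP b (F x1 + F x2 + F x3 + F (x1 + x2 + x3)))
      = ∑ x1 : V n, ∑ x2 : V n, ∑ x3 : V n, ∑ b : V n,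
        e (dotP b (F x1 + F x2 + F x3 + F (x1 + x2 + x3))) := by
    rw [Finset.sum_comm]
    refine sum_congr rfl fun x1 _ => ?_
    rw [Finset.sum_comm]
    refine sum_congr rfl fun x2 _ => ?_
    rw [Finset.sum_comm]
  rw [swap]
  have inner : ∀ x1 x2 x3 : V n, ∑ b : V n,
      e (dotP b (F x1 + F x2 + F x3 + F (x1 + x2 + x3)))
      = 2 ^ n * (if F x1 + F x2 + F x3 + F (x1 + x2 + x3) = 0 then (1:ℤ) else 0) := by
    intro x1 x2 x3
    rw [sum_e_dotP_left]
    split_ifs <;> ring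
  simp only [inner]
  rw [Nint]
  simp only [← Finset.mul_sum]
  rw [← mul_assoc, ← pow_add]
  congr 1
  ring

lemma b0_term {n : ℕ} (F : V n → V n) :
    ∑ u : V n, (walsh (fun x => dotP (0 : V n) (F x)) u) ^ 4 = 2 ^ (4 * n) := by
  rw [walsh4_sum]
  simp only [dotP_zero_left, e_zero]
  simp only [Finset.sum_const, card_univ, card_V, nsmul_eq_mul, mul_one]
  push_cast
  rw [← pow_add, ← pow_add, ← pow_add]
  congr 1
  ring

lemma dcnt_cast {n : ℕ} (F : V n → V n) (a v : V n) :
    ((dcnt F a v : ℤ)) = ∑ x : V n, if F (x + a) + F x = v then (1:ℤ) else 0 := by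
  rw [dcnt, Finset.sum_boole]

lemma pair_count {α β : Type*} [Fintype α] [Fintype β] [DecidableEq β] (D : α → β) :
    ∑ x : α, ∑ y : α, (if D y = D x then (1:ℤ) else 0)
      = ∑ v : β, (∑ x : α, if D x = v then (1:ℤ) else 0) ^ 2 := by
  have step : ∀ v : β, (∑ x : α, if D x = v then (1:ℤ) else 0) ^ 2
      = ∑ x : α, ∑ y : α, (if D x = v then (1:ℤ) else 0) * (if D y = v then (1:ℤ) else 0) := by
    intro v
    rw [sq]
    exact Finset.sum_mul_sum univ univ (fun x : α => if D x = v then (1:ℤ) else 0)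
      (fun y : α => if D y = v then (1:ℤ) else 0)
  simp only [step]
  have h1 : ∑ v : β, ∑ x : α, ∑ y : α,
        (if D x = v then (1:ℤ) else 0) * (if D y = v then (1:ℤ) else 0)
      = ∑ x : α, ∑ v : β, ∑ y : α,
        (if D x = v then (1:ℤ) else 0) * (if D y = v then (1:ℤ) else 0) :=
    Finset.sum_comm
  rw [h1]
  refine sum_congr rfl fun x _ => ?_
  have h2 : ∑ v : β, ∑ y : α,
        (if D x = v then (1:ℤ) else 0) * (if D y = v then (1:ℤ) else 0)
      = ∑ y : α, ∑ v : β,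
        (if D x = v then (1:ℤ) else 0) * (if D y = v then (1:ℤ) else 0) :=
    Finset.sum_comm
  rw [h2]
  refine sum_congr rfl fun y _ => ?_
  symm
  rw [Finset.sum_eq_single (D x)]
  · simp [eq_comm]
  · intro v _ hv
    rw [if_neg (fun h => hv h.symm), zero_mul]
  · intro h; exact absurd (mem_univ _) h

lemma four_add_eq_zero_iff {n : ℕ} (P Q R S : V n) :
    P + Q + R + S = 0 ↔ S + R = Q + P := by
  rw [← add_eq_zero_iff_V (Q + P) (S + R)]
  constructor <;> intro h
  · rw [← h]; abel
  · rw [← h]; abel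

lemma Nint_eq {n : ℕ} (F : V n → V n) :
    Nint F = ∑ a : V n, ∑ v : V n, ((dcnt F a v : ℤ)) ^ 2 := by
  have reindex : ∀ x1 : V n, (∑ x2 : V n, ∑ x3 : V n,
      if F x1 + F x2 + F x3 + F (x1 + x2 + x3) = 0 then (1 : ℤ) else 0)
      = ∑ a : V n, ∑ x3 : V n,
          if F x1 + F (x1 + a) + F x3 + F (x3 + a) = 0 then (1 : ℤ) else 0 := by
    intro x1
    refine (Fintype.sum_equiv (Equiv.addLeft x1) _ _ fun a => ?_).symm
    refine sum_congr rfl fun x3 _ => ?_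
    have h1 : (x1 + (x1 + a) : V n) + x3 = x3 + a := by
      rw [← add_assoc x1 x1 a, char2V, zero_add, add_comm]
    rw [show (Equiv.addLeft x1) a = x1 + a from rfl, h1]
  rw [Nint]
  simp only [reindex]
  rw [Finset.sum_comm]
  refine sum_congr rfl fun a _ => ?_
  have cond : ∀ x1 x3 : V n,
      (F x1 + F (x1 + a) + F x3 + F (x3 + a) = 0)
        ↔ ((fun x => F (x + a) + F x) x3 = (fun x => F (x + a) + F x) x1) := by
    intro x1 x3
    simpa using four_add_eq_zero_iff (F x1) (F (x1 + a)) (F x3) (F (x3 + a))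
  calc ∑ x1 : V n, ∑ x3 : V n,
        (if F x1 + F (x1 + a) + F x3 + F (x3 + a) = 0 then (1:ℤ) else 0)
      = ∑ x1 : V n, ∑ x3 : V n,
        (if (fun x => F (x + a) + F x) x3 = (fun x => F (x + a) + F x) x1
          then (1:ℤ) else 0) := by
        refine sum_congr rfl fun x1 _ => sum_congr rfl fun x3 _ => ?_
        rw [if_congr (cond x1 x3) rfl rfl]
    _ = ∑ v : V n, ((dcnt F a v : ℤ)) ^ 2 := by
        rw [pair_count (fun x => F (x + a) + F x)]
        refine sum_congr rfl fun v _ => ?_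
        rw [dcnt_cast]

lemma dcnt_total {n : ℕ} (F : V n → V n) (a : V n) :
    ∑ v : V n, ((dcnt F a v : ℤ)) = 2 ^ n := by
  simp only [dcnt_cast]
  rw [Finset.sum_comm]
  have : ∀ x : V n, ∑ v : V n, (if F (x + a) + F x = v then (1:ℤ) else 0) = 1 := by
    intro x
    rw [Finset.sum_ite_eq univ (F (x + a) + F x) (fun _ => (1:ℤ))]
    simp
  simp only [this, Finset.sum_const, card_univ, card_V, nsmul_eq_mul, mul_one]
  push_cast
  ring

lemma dcnt_zero {n : ℕ} (F : V n → V n) (v : V n) :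
    ((dcnt F 0 v : ℤ)) = if v = 0 then (2:ℤ) ^ n else 0 := by
  rw [dcnt]
  have : ∀ x : V n, (F (x + 0) + F x = v) ↔ (v = 0) := by
    intro x
    rw [add_zero, char2V (F x)]
    exact eq_comm
  simp only [this]
  rcases eq_or_ne v 0 with h | h
  · simp [h, card_univ, card_V]
  · simp [h]

lemma dcnt_even {n : ℕ} (F : V n → V n) {a : V n} (ha : a ≠ 0) (v : V n) :
    2 ∣ dcnt F a v := by
  rw [← ZMod.natCast_eq_zero_iff]
  rw [dcnt, Finset.card_eq_sum_ones, Nat.cast_sum]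
  refine Finset.sum_involution (fun x _ => x + a) ?_ ?_ ?_ ?_
  · intro x _; decide
  · intro x _ _ hc
    apply ha
    have h0 : x + a = x + 0 := by rw [add_zero]; exact hc
    exact add_left_cancel h0
  · intro x hx
    simp only [Finset.mem_filter, Finset.mem_univ, true_and] at hx ⊢
    have h2 : (x + a) + a = x := by rw [add_assoc, char2V, add_zero]
    rw [h2, ← hx, add_comm]
  · intro x _
    show x + a + a = x
    rw [add_assoc, char2V, add_zero]

lemma diffUnif_eq_two_iff {n : ℕ} (hn : 1 ≤ n) (F : V n → V n) :
    diffUnif F = 2 ↔ ∀ a : V n, a ≠ 0 → ∀ v : V n, dcnt F a v ≤ 2 := by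
  have hsup : ∀ a : V n, a ≠ 0 → ∀ v : V n, dcnt F a v ≤ diffUnif F := by
    intro a ha v
    have hm : (a, v) ∈ Finset.univ.filter fun p : V n × V n => p.1 ≠ 0 := by
      simp [Finset.mem_filter, ha]
    have h := Finset.le_sup (s := Finset.univ.filter fun p : V n × V n => p.1 ≠ 0)
      (f := fun p : V n × V n =>
        (univ.filter fun x => F (x + p.1) + F x = p.2).card) hm
    exact h
  have lower : 2 ≤ diffUnif F := by
    set i : Fin n := ⟨0, hn⟩
    set a0 : V n := Pi.single i 1 with ha0def
    have ha0 : a0 ≠ 0 := by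
      intro h
      have := congrFun h i
      simp [ha0def, Pi.single_apply] at this
    set v0 : V n := F (0 + a0) + F 0 with hv0
    have hsub : ({0, a0} : Finset (V n)) ⊆
        univ.filter fun x => F (x + a0) + F x = v0 := by
      intro x hx
      simp only [Finset.mem_insert, Finset.mem_singleton] at hx
      rcases hx with rfl | rfl
      · simp [Finset.mem_filter, hv0]
      · simp only [Finset.mem_filter, Finset.mem_univ, true_and, hv0]
        rw [char2V a0, zero_add]
        exact add_comm _ _
    have hcard : 2 ≤ dcnt F a0 v0 := by
      have h2 : ({0, a0} : Finset (V n)).card = 2 := by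
        rw [Finset.card_insert_of_notMem (by simpa using ha0.symm), Finset.card_singleton]
      calc 2 = ({0, a0} : Finset (V n)).card := h2.symm
        _ ≤ _ := Finset.card_le_card hsub
    exact le_trans hcard (hsup a0 ha0 v0)
  constructor
  · intro h a ha v
    rw [← h]
    exact hsup a ha v
  · intro h
    refine le_antisymm ?_ lower
    refine Finset.sup_le fun p hp => ?_
    simp only [Finset.mem_filter, Finset.mem_univ, true_and] at hp
    exact h p.1 hp p.2

/-- An `(n,n)`-function `F` is APN (differential uniformity 2) iff
`∑_{b ≠ 0} α(F_b) = 2^(n+1) - 2`. -/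
theorem apn_iff_sum_alpha {n : ℕ} (hn : 1 ≤ n) (F : V n → V n) :
    diffUnif F = 2 ↔
      ∑ b ∈ Finset.univ.filter (fun b : V n => b ≠ 0),
        alphaQ (fun x => dotP b (F x)) = 2 ^ (n + 1) - 2 := by
  classical
  set T : V n → ℤ := fun b => ∑ u : V n, (walsh (fun x => dotP b (F x)) u) ^ 4 with hT
  have hfilter : (Finset.univ.filter fun b : V n => b ≠ 0) = Finset.univ.erase 0 := by
    rw [Finset.filter_ne']
  -- S = sum over nonzero b of T b
  set S : ℤ := ∑ b ∈ Finset.univ.erase 0, T b with hS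
  have hSplit : T 0 + S = ∑ b : V n, T b :=
    Finset.add_sum_erase univ T (mem_univ 0)
  have hTotal : ∑ b : V n, T b = 2 ^ (2 * n) * Nint F := total_sum F
  have hT0 : T 0 = 2 ^ (4 * n) := b0_term F
  have hSval : S = 2 ^ (2 * n) * Nint F - 2 ^ (4 * n) := by
    rw [← hTotal, ← hSplit, hT0]; ring
  -- the rational sum equals S / 2^(3n)
  have hQ : ∑ b ∈ Finset.univ.filter (fun b : V n => b ≠ 0),
      alphaQ (fun x => dotP b (F x)) = (S : ℚ) / 2 ^ (3 * n) := by
    rw [hfilter, hS]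
    push_cast
    rw [Finset.sum_div]
    rfl
  -- the rational condition is equivalent to an integer condition on Nint
  have hpow_ne : ((2 : ℚ) ^ (3 * n)) ≠ 0 := by positivity
  have step1 : (∑ b ∈ Finset.univ.filter (fun b : V n => b ≠ 0),
      alphaQ (fun x => dotP b (F x)) = 2 ^ (n + 1) - 2)
      ↔ S = (2 ^ (n + 1) - 2) * 2 ^ (3 * n) := by
    rw [hQ, div_eq_iff hpow_ne]
    constructor
    · intro h
      have : ((S : ℚ)) = (((2 ^ (n + 1) - 2) * 2 ^ (3 * n) : ℤ) : ℚ) := by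
        push_cast; linarith
      exact_mod_cast this
    · intro h
      rw [h]; push_cast; ring
  -- integer condition on Nint
  have step2 : (S = (2 ^ (n + 1) - 2) * 2 ^ (3 * n))
      ↔ Nint F = 2 ^ (2 * n) + (2 ^ (n + 1) - 2) * 2 ^ n := by
    rw [hSval]
    have e1 : (2 : ℤ) ^ (4 * n) = 2 ^ (2 * n) * 2 ^ (2 * n) := by
      rw [← pow_add]; congr 1; ring
    have e2 : (2 : ℤ) ^ (3 * n) = 2 ^ (2 * n) * 2 ^ n := by
      rw [← pow_add]; congr 1; ring
    constructor
    · intro h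
      have h' : 2 ^ (2 * n) * Nint F
          = 2 ^ (2 * n) * (2 ^ (2 * n) + (2 ^ (n + 1) - 2) * 2 ^ n) := by
        rw [e1, e2] at h
        linear_combination h
      exact mul_left_cancel₀ (pow_ne_zero _ (two_ne_zero)) h'
    · intro h
      rw [h, e1, e2]; ring
  -- split Nint via dcnt
  set G : V n → ℤ := fun a => ∑ v : V n, ((dcnt F a v : ℤ) ^ 2 - 2 * (dcnt F a v : ℤ))
    with hG
  have hNsplit : Nint F = 2 ^ (2 * n) + (2 ^ n - 1) * 2 ^ (n + 1)
      + ∑ a ∈ Finset.univ.erase 0, G a := by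
    rw [Nint_eq F]
    rw [← Finset.add_sum_erase univ (fun a => ∑ v : V n, ((dcnt F a v : ℤ)) ^ 2) (mem_univ 0)]
    have h0 : ∑ v : V n, ((dcnt F 0 v : ℤ)) ^ 2 = 2 ^ (2 * n) := by
      have hv : ∀ v : V n, ((dcnt F 0 v : ℤ)) ^ 2
          = if v = 0 then ((2:ℤ) ^ n) ^ 2 else 0 := by
        intro v; rw [dcnt_zero]; split_ifs <;> ring
      simp only [hv]
      rw [Finset.sum_ite_eq' univ (0 : V n) (fun _ => ((2:ℤ)^n)^2)]
      simp only [mem_univ, if_true]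
      rw [← pow_mul]
      congr 1
      ring
    rw [h0]
    have hterm : ∀ a ∈ Finset.univ.erase (0 : V n),
        ∑ v : V n, ((dcnt F a v : ℤ)) ^ 2 = 2 ^ (n + 1) + G a := by
      intro a _
      have hGa : G a = ∑ v : V n, ((dcnt F a v : ℤ) ^ 2 - 2 * (dcnt F a v : ℤ)) := rfl
      have hsplit2 : ∑ v : V n, ((dcnt F a v : ℤ) ^ 2 - 2 * (dcnt F a v : ℤ))
          = ∑ v : V n, ((dcnt F a v : ℤ)) ^ 2 - 2 * ∑ v : V n, ((dcnt F a v : ℤ)) := by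
        rw [Finset.sum_sub_distrib, Finset.mul_sum]
      rw [hGa, hsplit2, dcnt_total]
      ring
    rw [Finset.sum_congr rfl hterm, Finset.sum_add_distrib, Finset.sum_const]
    have hcard : (Finset.univ.erase (0 : V n)).card = 2 ^ n - 1 := by
      rw [Finset.card_erase_of_mem (mem_univ 0), card_univ, card_V]
    rw [hcard, nsmul_eq_mul]
    have hcast : ((2 ^ n - 1 : ℕ) : ℤ) = 2 ^ n - 1 := by
      push_cast [Nat.one_le_two_pow]
      ring
    rw [hcast]
    ring
  -- combine: Nint condition iff sum of G is zero
  have htargets : (2 : ℤ) ^ (2 * n) + (2 ^ (n + 1) - 2) * 2 ^ n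
      = 2 ^ (2 * n) + (2 ^ n - 1) * 2 ^ (n + 1) := by ring
  have step3 : (Nint F = 2 ^ (2 * n) + (2 ^ (n + 1) - 2) * 2 ^ n)
      ↔ ∑ a ∈ Finset.univ.erase 0, G a = 0 := by
    rw [hNsplit, htargets]
    constructor
    · intro h; linarith
    · intro h; rw [h]; ring
  -- G terms nonneg and zero iff dcnt ≤ 2
  have hterm_nonneg : ∀ a : V n, a ≠ 0 → ∀ v : V n,
      0 ≤ (dcnt F a v : ℤ) ^ 2 - 2 * (dcnt F a v : ℤ) := by
    intro a ha v
    rcases eq_or_ne (dcnt F a v) 0 with h | h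
    · simp [h]
    · have h2 : 2 ≤ dcnt F a v := Nat.le_of_dvd (Nat.pos_of_ne_zero h) (dcnt_even F ha v)
      have h2' : (2 : ℤ) ≤ (dcnt F a v : ℤ) := by exact_mod_cast h2
      nlinarith
  have hG_nonneg : ∀ a ∈ Finset.univ.erase (0 : V n), 0 ≤ G a := by
    intro a ha
    have ha' : a ≠ 0 := (Finset.mem_erase.mp ha).1
    exact Finset.sum_nonneg fun v _ => hterm_nonneg a ha' v
  have step4 : (∑ a ∈ Finset.univ.erase 0, G a = 0)
      ↔ ∀ a : V n, a ≠ 0 → ∀ v : V n, dcnt F a v ≤ 2 := by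
    rw [Finset.sum_eq_zero_iff_of_nonneg hG_nonneg]
    constructor
    · intro h a ha v
      have hGa : G a = 0 := h a (Finset.mem_erase.mpr ⟨ha, mem_univ a⟩)
      have := (Finset.sum_eq_zero_iff_of_nonneg
        (fun v _ => hterm_nonneg a ha v)).mp hGa v (mem_univ v)
      -- (dcnt)^2 - 2*dcnt = 0 → dcnt ≤ 2
      by_contra hc
      push_neg at hc
      have h3 : (3 : ℤ) ≤ (dcnt F a v : ℤ) := by exact_mod_cast hc
      nlinarith
    · intro h a ha
      have ha' : a ≠ 0 := (Finset.mem_erase.mp ha).1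
      show ∑ v : V n, ((dcnt F a v : ℤ) ^ 2 - 2 * (dcnt F a v : ℤ)) = 0
      refine Finset.sum_eq_zero fun v _ => ?_
      have hle := h a ha' v
      have hdvd := dcnt_even F ha' v
      interval_cases hd : dcnt F a v
      · simp
      · exfalso; omega
      · norm_num
  rw [diffUnif_eq_two_iff hn F, step1, step2, step3, step4]
end

section
/- For a quadratic APN function F on F_2^n with n ≥ 2, there exists a unique function π_F: F_2^n → F_2^n such that π_F(0) = 0, π_F(a) ≠ 0 for all a ≠ 0, and π_F(a) · (F(x) + F(x+a) + F(0) + F(a)) = 0 for all a, x ∈ F_2^n. -/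
open Finset

/-- A function has algebraic degree at most 2 iff all its second-order derivatives are constant. -/
def IsQuadratic {G H : Type*} [AddCommGroup G] [AddCommGroup H] (F : G → H) : Prop :=
  ∀ a b x, F (x + a + b) + F (x + a) + F (x + b) + F x = F (a + b) + F a + F b + F 0

section Aux

variable {n : ℕ}

lemma two_eq_zero_V (n : ℕ) : (2 : V n) = 0 := by
  rw [← one_add_one_eq_two]
  funext i
  rfl

/-- The dot product as a bilinear map into the dual. -/
noncomputable def dotB (n : ℕ) : V n →ₗ[ZMod 2] Module.Dual (ZMod 2) (V n) :=
  LinearMap.mk₂ (ZMod 2) (fun a x => dotP a x)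
    (by intro a b x; simp [dotP, add_mul, Finset.sum_add_distrib])
    (by intro c a x; simp [dotP, Finset.mul_sum, mul_assoc])
    (by intro a x y; simp [dotP, mul_add, Finset.sum_add_distrib])
    (by intro c a x
        simp only [dotP, Pi.smul_apply, smul_eq_mul, Finset.mul_sum]
        exact Finset.sum_congr rfl fun i _ => by ring)

lemma dotB_apply (a x : V n) : dotB n a x = dotP a x := rfl

lemma dotB_injective (n : ℕ) : Function.Injective (dotB n) := by
  rw [injective_iff_map_eq_zero]
  intro a ha
  funext i
  have h := congrArg (fun φ => φ (Pi.single i 1)) ha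
  simp only [dotB_apply, dotP] at h
  rw [Finset.sum_eq_single i] at h
  · simpa using h
  · intro j _ hj; simp [Pi.single_eq_of_ne hj]
  · simp

/-- The dot product pairing as a linear equivalence onto the dual. -/
noncomputable def dotE (n : ℕ) : V n ≃ₗ[ZMod 2] Module.Dual (ZMod 2) (V n) :=
  LinearMap.linearEquivOfInjective (dotB n) (dotB_injective n)
    (by rw [Subspace.dual_finrank_eq])

lemma dotE_apply (a x : V n) : dotE n a x = dotP a x := rfl

/-- A one-dimensional subspace of `F_2^n` contains a unique nonzero vector. -/
lemma existsUnique_of_finrank_one (W : Submodule (ZMod 2) (V n))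
    (hW : Module.finrank (ZMod 2) W = 1) :
    ∃! v : V n, v ≠ 0 ∧ v ∈ W := by
  obtain ⟨⟨v, hvW⟩, hv0, hspan⟩ := (finrank_eq_one_iff' ).mp hW
  have hvne : v ≠ 0 := by
    intro h; exact hv0 (Subtype.ext h)
  refine ⟨v, ⟨hvne, hvW⟩, ?_⟩
  rintro w ⟨hwne, hwW⟩
  obtain ⟨c, hc⟩ := hspan ⟨w, hwW⟩
  have hcv : c • v = w := congrArg Subtype.val hc
  have hc1 : c = 1 := by
    rcases (by decide : ∀ c : ZMod 2, c = 0 ∨ c = 1) c with h | h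
    · exfalso; apply hwne; rw [← hcv, h, zero_smul]
    · exact h
  rw [← hcv, hc1, one_smul]

end Aux

set_option maxHeartbeats 2000000 in
/-- Existence and uniqueness of the ortho-derivative of a quadratic APN function on
`F_2^n`, `n ≥ 2`. -/
theorem orthoDerivative_existsUnique {n : ℕ} (hn : 2 ≤ n) (F : V n → V n)
    (hq : IsQuadratic F) (hapn : diffUnif F = 2) :
    ∃! π : V n → V n, π 0 = 0 ∧ (∀ a : V n, a ≠ 0 → π a ≠ 0) ∧
      ∀ a x : V n, dotP (π a) (F x + F (x + a) + F 0 + F a) = 0 := by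
  classical
  have h2 : (2 : V n) = 0 := two_eq_zero_V n
  set L : V n → V n → V n := fun a x => F x + F (x + a) + F 0 + F a with hL
  -- additivity of the derivative
  have hLadd : ∀ a x y, L a (x + y) = L a x + L a y := by
    intro a x y
    have key := hq y a x
    simp only [hL]
    linear_combination key - (F x + F (x + a)) * h2
  have hL0 : ∀ a, L a 0 = 0 := by
    intro a
    simp only [hL, zero_add]
    linear_combination (F 0 + F a) * h2
  have hLa : ∀ a, L a a = 0 := by
    intro a
    have haa : a + a = 0 := by linear_combination a * h2
    simp only [hL, haa]
    linear_combination (F 0 + F a) * h2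
  -- APN bound on fibers
  have hfib_le : ∀ (a : V n), a ≠ 0 → ∀ b : V n,
      (Finset.univ.filter fun x => L a x = b).card ≤ 2 := by
    intro a ha b
    have hle : (Finset.univ.filter fun x => F (x + a) + F x = b + F 0 + F a).card ≤ 2 := by
      have hsup : (Finset.univ.filter fun x => F (x + a) + F x = b + F 0 + F a).card ≤
          diffUnif F :=
        Finset.le_sup (f := fun p : V n × V n =>
          (Finset.univ.filter fun x => F (x + p.1) + F x = p.2).card)
          (Finset.mem_filter.mpr ⟨Finset.mem_univ (a, b + F 0 + F a), ha⟩)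
      rwa [hapn] at hsup
    refine le_trans (le_of_eq ?_) hle
    congr 1
    apply Finset.filter_congr
    intro x _
    simp only [hL]
    constructor
    · intro h; linear_combination h - (F 0 + F a) * h2
    · intro h; linear_combination h + (F 0 + F a) * h2
  -- the linear map x ↦ L a x
  set lin : V n → (V n →ₗ[ZMod 2] V n) := fun a =>
    AddMonoidHom.toZModLinearMap 2 (AddMonoidHom.mk' (L a) (hLadd a)) with hlin
  have hlin_apply : ∀ a x, lin a x = L a x := fun a x => rfl
  -- kernel has exactly 2 elements, hence finrank 1
  have hker_card : ∀ (a : V n), a ≠ 0 →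
      (Finset.univ.filter fun x => L a x = 0).card = 2 := by
    intro a ha
    refine le_antisymm (hfib_le a ha 0) (Finset.one_lt_card.mpr ?_)
    exact ⟨0, Finset.mem_filter.mpr ⟨Finset.mem_univ _, hL0 a⟩,
           a, Finset.mem_filter.mpr ⟨Finset.mem_univ _, hLa a⟩, Ne.symm ha⟩
  have hker_finrank : ∀ (a : V n), a ≠ 0 →
      Module.finrank (ZMod 2) (LinearMap.ker (lin a)) = 1 := by
    intro a ha
    have hset : (LinearMap.ker (lin a) : Set (V n)) =
        ↑(Finset.univ.filter fun x => L a x = 0) := by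
      ext x; simp [LinearMap.mem_ker, hlin_apply]
    have hcard : Nat.card (LinearMap.ker (lin a)) = 2 := by
      have h1 : Nat.card (LinearMap.ker (lin a)) =
          ((LinearMap.ker (lin a) : Set (V n))).ncard := Nat.card_coe_set_eq _
      rw [h1, hset, Set.ncard_coe_finset, hker_card a ha]
    have hpow : (2 : ℕ) = 2 ^ Module.finrank (ZMod 2) (LinearMap.ker (lin a)) := by
      have h3 := Module.card_eq_pow_finrank (K := ZMod 2) (V := LinearMap.ker (lin a))
      rw [Fintype.card_eq_nat_card, hcard] at h3
      simpa using h3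
    have h4 : (2:ℕ) ^ 1 = 2 ^ Module.finrank (ZMod 2) (LinearMap.ker (lin a)) := by
      rw [pow_one]; exact hpow
    have := Nat.pow_right_injective le_rfl h4
    omega
  have hVrank : Module.finrank (ZMod 2) (V n) = n := Module.finrank_fin_fun _
  -- range has finrank n - 1
  have hrange_finrank : ∀ (a : V n), a ≠ 0 →
      Module.finrank (ZMod 2) (LinearMap.range (lin a)) = n - 1 := by
    intro a ha
    have := LinearMap.finrank_range_add_finrank_ker (lin a)
    rw [hker_finrank a ha, hVrank] at this
    omega
  -- orthogonal complement of the range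
  set K : V n → Submodule (ZMod 2) (V n) := fun a =>
    Submodule.comap (dotE n).toLinearMap
      (Submodule.dualAnnihilator (LinearMap.range (lin a))) with hK
  have hK_mem : ∀ a v, v ∈ K a ↔ ∀ x, dotP v (L a x) = 0 := by
    intro a v
    simp only [hK, Submodule.mem_comap, LinearEquiv.coe_coe,
      Submodule.mem_dualAnnihilator]
    constructor
    · intro h x
      exact h (L a x) ⟨x, rfl⟩
    · rintro h w ⟨x, rfl⟩
      exact h x
  have hK_finrank : ∀ (a : V n), a ≠ 0 → Module.finrank (ZMod 2) (K a) = 1 := by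
    intro a ha
    have e1 : Module.finrank (ZMod 2) (K a) =
        Module.finrank (ZMod 2)
          (Submodule.dualAnnihilator (LinearMap.range (lin a))) := by
      have emap : K a = Submodule.map ((dotE n).symm : Module.Dual (ZMod 2) (V n) →ₗ[ZMod 2] V n)
          (Submodule.dualAnnihilator (LinearMap.range (lin a))) :=
        Submodule.comap_equiv_eq_map_symm _ _
      rw [emap]
      exact LinearEquiv.finrank_map_eq _ _
    have e2 : Module.finrank (ZMod 2)
          (Submodule.dualAnnihilator (LinearMap.range (lin a))) =
        Module.finrank (ZMod 2) (V n ⧸ LinearMap.range (lin a)) :=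
      (Subspace.quotEquivAnnihilator (LinearMap.range (lin a))).finrank_eq.symm
    have e3 := Submodule.finrank_quotient_add_finrank (LinearMap.range (lin a))
    rw [hrange_finrank a ha, hVrank] at e3
    rw [e1, e2]
    omega
  -- unique nonzero orthogonal vector for each a ≠ 0
  have H : ∀ a : V n, a ≠ 0 → ∃! v : V n, v ≠ 0 ∧ ∀ x, dotP v (L a x) = 0 := by
    intro a ha
    obtain ⟨v, ⟨hv0, hvK⟩, huniq⟩ :=
      existsUnique_of_finrank_one (K a) (hK_finrank a ha)
    exact ⟨v, ⟨hv0, (hK_mem a v).mp hvK⟩,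
      fun w ⟨hw0, hw⟩ => huniq w ⟨hw0, (hK_mem a w).mpr hw⟩⟩
  -- assemble the function
  refine ⟨fun a => if h : a = 0 then 0 else (H a h).choose, ⟨?_, ?_, ?_⟩, ?_⟩
  · simp
  · intro a ha
    simp only [dif_neg ha]
    exact (H a ha).choose_spec.1.1
  · intro a x
    by_cases ha : a = 0
    · subst ha
      simp [dotP]
    · simp only [dif_neg ha]
      exact (H a ha).choose_spec.1.2 x
  · rintro π ⟨hπ0, hπne, hπd⟩
    funext a
    by_cases ha : a = 0
    · subst ha; simpa using hπ0
    · simp only [dif_neg ha]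
      exact (H a ha).choose_spec.2 (π a) ⟨hπne a ha, fun x => hπd a x⟩
end
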